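/- Let (Ω, μ) be a probability space with events A (history of SARS-CoV-2 infection), Y (PASC status), and X (presence of a symptom). Assume: (i) setting α = μ(A), 0 < α < 1; (ii) μ(Y | Aᶜ) = 0; (iii) setting π = μ(Y | A), 0 < π < 1; (iv) conditionally on Y and conditionally on Yᶜ, the events X and A are independent; (v) setting β0 = μ(X | Yᶜ), 0 < β0 < 1, and 0 < μ(X) < 1. Let β1 = μ(X | Y)/μ(X | Yᶜ). Then θ1 = μ(A | X) satisfies θ1 = (β0·β1·π + β0·(1−π)) / (β0·β1·π + β0·(α⁻¹ − π)), and θ0 = μ(A | Xᶜ) satisfies θ0 = ((1−β0·β1)·π + (1−β0)·(1−π)) / ((1−β0·β1)·π + (1−β0)·(α⁻¹ − π)). -/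

import Mathlib

/-!
By the law of total probability over `Y`, and since Property 1 makes `Y ⊆ A` up to a null set,
`μ(Y) = μ(A ∩ Y) = π α`. Conditional independence of `X` and `A` given `Y` and given `Yᶜ` then yields
`μ(A ∩ X) = α (β0 β1 π + β0 (1 - π))` and `μ(X) = α (β0 β1 π + β0 (α⁻¹ - π))`; the factor `α`
cancels in `μ(A ∩ X) / μ(X)`, and likewise in `μ(A ∩ Xᶜ) / μ(Xᶜ)` after passing to complements.
-/

open MeasureTheory

/-- Conditional probability `μ(E | F) = μ(E ∩ F) / μ(F)`, as a real number. -/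
noncomputable def cpr {Ω : Type*} [MeasurableSpace Ω] (μ : Measure Ω) (E F : Set Ω) : ℝ :=
  (μ (E ∩ F)).toReal / (μ F).toReal

section CondProb

variable {Ω : Type*} [MeasurableSpace Ω] {μ : Measure Ω} [IsFiniteMeasure μ]

-- Holds without `μ F ≠ 0`: a null `F` makes both sides vanish.
lemma cpr_mul_measureReal (E F : Set Ω) : cpr μ E F * μ.real F = μ.real (E ∩ F) := by
  rcases eq_or_ne (μ.real F) 0 with hF | hF
  · have hEF : μ.real (E ∩ F) = 0 :=
      le_antisymm (hF ▸ measureReal_mono Set.inter_subset_right) measureReal_nonneg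
    rw [hF, hEF, mul_zero]
  · exact div_mul_cancel₀ _ hF

lemma measureReal_eq_cpr_mul_add_cpr_mul {F : Set Ω} (hF : MeasurableSet F) (E : Set Ω) :
    μ.real E = cpr μ E F * μ.real F + cpr μ E Fᶜ * μ.real Fᶜ := by
  rw [cpr_mul_measureReal, cpr_mul_measureReal, ← Set.sdiff_eq, measureReal_inter_add_sdiff hF]

lemma cpr_inter_mul_measureReal_of_cpr_inter_eq_mul {E G F : Set Ω}
    (h : cpr μ (E ∩ G) F = cpr μ E F * cpr μ G F) :
    cpr μ (E ∩ G) F * μ.real F = cpr μ E F * μ.real (G ∩ F) := by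
  rw [h, mul_assoc, cpr_mul_measureReal]

lemma cpr_compl_right [IsProbabilityMeasure μ] {X : Set Ω} (hX : MeasurableSet X) (A : Set Ω) :
    cpr μ A Xᶜ = (μ.real A - μ.real (A ∩ X)) / (1 - μ.real X) := by
  rw [cpr, ← measureReal_inter_add_sdiff (s := A) hX, Set.sdiff_eq, add_sub_cancel_left,
    ← probReal_compl_eq_one_sub hX]
  rfl

end CondProb

theorem theta_formulas_general
    {Ω : Type*} [MeasurableSpace Ω] (μ : Measure Ω) [IsProbabilityMeasure μ]
    (A Y X : Set Ω)
    (hAm : MeasurableSet A) (hYm : MeasurableSet Y) (hXm : MeasurableSet X)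
    -- (i) α = μ(A), 0 < α < 1
    (α : ℝ) (hαdef : α = (μ A).toReal) (hα0 : 0 < α)
    -- (ii) μ(Y | Aᶜ) = 0
    (hProp1 : cpr μ Y Aᶜ = 0)
    -- (iii) π = μ(Y | A), 0 < π < 1
    (π : ℝ) (hπdef : π = cpr μ Y A)
    -- (iv) X ⫫ A conditionally on Y and on Yᶜ
    (hProp2 : cpr μ (X ∩ A) Y = cpr μ X Y * cpr μ A Y)
    (hProp2c : cpr μ (X ∩ A) Yᶜ = cpr μ X Yᶜ * cpr μ A Yᶜ)
    -- (v) β0 = μ(X | Yᶜ), 0 < β0 < 1, and 0 < μ(X) < 1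
    (β0 : ℝ) (hβ0def : β0 = cpr μ X Yᶜ) (hβ00 : 0 < β0)
    -- β1
    (β1 : ℝ) (hβ1def : β1 = cpr μ X Y / cpr μ X Yᶜ) :
    cpr μ A X =
      (β0 * β1 * π + β0 * (1 - π)) / (β0 * β1 * π + β0 * (α⁻¹ - π)) ∧
    cpr μ A Xᶜ =
      ((1 - β0 * β1) * π + (1 - β0) * (1 - π)) /
        ((1 - β0 * β1) * π + (1 - β0) * (α⁻¹ - π)) := by
  have hA : μ.real A = α := hαdef.symm
  have hAY : μ.real (A ∩ Y) = π * α := by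
    rw [Set.inter_comm, ← cpr_mul_measureReal, ← hπdef, hA]
  have hY : μ.real Y = π * α := by
    rw [measureReal_eq_cpr_mul_add_cpr_mul hAm, hProp1, ← hπdef, hA, zero_mul, add_zero]
  have hAYc : μ.real (A ∩ Yᶜ) = α - π * α := by
    rw [← hAY, ← hA, ← measureReal_inter_add_sdiff (s := A) hYm, Set.sdiff_eq, add_sub_cancel_left]
  have hXY : cpr μ X Y = β0 * β1 := by
    rw [hβ1def, ← hβ0def, mul_div_cancel₀ _ hβ00.ne']
  have hX : μ.real X = α * (β0 * β1 * π + β0 * (α⁻¹ - π)) := by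
    rw [measureReal_eq_cpr_mul_add_cpr_mul hYm, hXY, hY, ← hβ0def,
      probReal_compl_eq_one_sub hYm, hY]
    field_simp
  have hAX : μ.real (A ∩ X) = α * (β0 * β1 * π + β0 * (1 - π)) := by
    rw [Set.inter_comm, measureReal_eq_cpr_mul_add_cpr_mul hYm,
      cpr_inter_mul_measureReal_of_cpr_inter_eq_mul hProp2,
      cpr_inter_mul_measureReal_of_cpr_inter_eq_mul hProp2c, hXY, ← hβ0def, hAY, hAYc]
    ring
  constructor
  · rw [cpr, ← measureReal_def, ← measureReal_def, hAX, hX, mul_div_mul_left _ _ hα0.ne']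
  · have hAXc : μ.real A - μ.real (A ∩ X) =
        α * ((1 - β0 * β1) * π + (1 - β0) * (1 - π)) := by
      rw [hA, hAX]; ring
    have hXc : 1 - μ.real X = α * ((1 - β0 * β1) * π + (1 - β0) * (α⁻¹ - π)) := by
      rw [hX]; field_simp; ring
    rw [cpr_compl_right hXm, hAXc, hXc, mul_div_mul_left _ _ hα0.ne']

/-- Intermediate step of Theorem 1: explicit formulas for
`θ1 = μ(A | X)` and `θ0 = μ(A | Xᶜ)` in terms of `α`, `π`, `β0`, `β1`. -/
theorem theta_formulas
    {Ω : Type*} [MeasurableSpace Ω] (μ : Measure Ω) [IsProbabilityMeasure μ]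
    (A Y X : Set Ω)
    (hAm : MeasurableSet A) (hYm : MeasurableSet Y) (hXm : MeasurableSet X)
    -- (i) α = μ(A), 0 < α < 1
    (α : ℝ) (hαdef : α = (μ A).toReal) (hα0 : 0 < α) (hα1 : α < 1)
    -- (ii) μ(Y | Aᶜ) = 0
    (hProp1 : cpr μ Y Aᶜ = 0)
    -- (iii) π = μ(Y | A), 0 < π < 1
    (π : ℝ) (hπdef : π = cpr μ Y A) (hπ0 : 0 < π) (hπ1 : π < 1)
    -- (iv) X ⫫ A conditionally on Y and on Yᶜ
    (hProp2 : cpr μ (X ∩ A) Y = cpr μ X Y * cpr μ A Y)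
    (hProp2c : cpr μ (X ∩ A) Yᶜ = cpr μ X Yᶜ * cpr μ A Yᶜ)
    -- (v) β0 = μ(X | Yᶜ), 0 < β0 < 1, and 0 < μ(X) < 1
    (β0 : ℝ) (hβ0def : β0 = cpr μ X Yᶜ) (hβ00 : 0 < β0) (hβ01 : β0 < 1)
    (hX0 : 0 < (μ X).toReal) (hX1 : (μ X).toReal < 1)
    -- β1
    (β1 : ℝ) (hβ1def : β1 = cpr μ X Y / cpr μ X Yᶜ) :
    cpr μ A X =
      (β0 * β1 * π + β0 * (1 - π)) / (β0 * β1 * π + β0 * (α⁻¹ - π)) ∧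
    cpr μ A Xᶜ =
      ((1 - β0 * β1) * π + (1 - β0) * (1 - π)) /
        ((1 - β0 * β1) * π + (1 - β0) * (α⁻¹ - π)) :=
  theta_formulas_general μ A Y X hAm hYm hXm α hαdef hα0 hProp1 π hπdef hProp2 hProp2c β0 hβ0def
    hβ00 β1 hβ1def
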